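/- Let 𝒜 and ℬ be partially ordered sets, f : 𝒜 → ℬ an order embedding (a₁ ≤ a₂ if and only if f a₁ ≤ f a₂), V a vector space over a field K, and W : 𝒜 → Submodule K V a monotone map. Define the pushforward f_*W : ℬ → Submodule K V by f_*W(b) = ⨆_{a ∈ 𝒜, f a ≤ b} W a. Then W is decomposable if and only if f_*W is decomposable. -/

import Mathlib

/-!
A decomposition `s` of `W` transports to `f_*W` by extending it by `⊥` off the image of `f`.
Conversely, a decomposition `t` of `f_*W` vanishes off the image of `f`: for `b` outside it,
`f_*W b` is already the supremum of the `f_*W c` with `c < b`, so `t b ≤ f_*W b` lies below the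
supremum of the other `t c`, and independence forces `t b = ⊥`. Hence `t ∘ f`
decomposes `W`, because `f_*W (f a) = W a`.
-/

open Function Set

section

variable {α A B ι ι' : Type*} [CompleteLattice α]

theorem biSup_eq_biSup_comp_of_forall_notMem_range {f : ι' → ι} {t : ι → α}
    (ht : ∀ c ∉ range f, t c = ⊥) (p : ι → Prop) :
    ⨆ c, ⨆ _ : p c, t c = ⨆ a, ⨆ _ : p (f a), t (f a) := by
  refine le_antisymm (iSup₂_le fun c hc => ?_)
    (iSup₂_le fun a ha => le_iSup₂_of_le (f a) ha le_rfl)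
  by_cases hcf : c ∈ range f
  · obtain ⟨a, rfl⟩ := hcf
    exact le_iSup₂_of_le a hc le_rfl
  · simp [ht c hcf]

theorem iSupIndep.extend_bot {f : ι' → ι} {s : ι' → α} (hs : iSupIndep s) (hf : Injective f) :
    iSupIndep (extend f s ⊥) := by
  intro c
  by_cases hc : c ∈ range f
  · obtain ⟨a, rfl⟩ := hc
    rw [biSup_eq_biSup_comp_of_forall_notMem_range (fun c h => extend_apply' s ⊥ c h) (· ≠ f a)]
    simpa only [hf.extend_apply, hf.ne_iff] using hs a
  · rw [extend_apply' s ⊥ c hc]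
    exact disjoint_bot_left

section Decomposition

variable [Preorder A] {F s : A → α}

def IsDecomposition (F s : A → α) : Prop :=
  iSupIndep s ∧ ∀ a, F a = ⨆ b, ⨆ _ : b ≤ a, s b

def IsDecomposable (F : A → α) : Prop :=
  ∃ s, IsDecomposition F s

theorem IsDecomposition.le_apply (hs : IsDecomposition F s) (a : A) : s a ≤ F a :=
  (hs.2 a).ge.trans' (le_iSup₂_of_le a le_rfl le_rfl)

theorem IsDecomposition.eq_bot_of_le_iSup_lt (hs : IsDecomposition F s) {a : A}
    (ha : F a ≤ ⨆ b, ⨆ _ : b < a, F b) : s a = ⊥ := by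
  refine (hs.1 a).eq_bot_of_le ((hs.le_apply a).trans (ha.trans (iSup₂_le fun b hb => ?_)))
  rw [hs.2 b]
  exact iSup₂_le fun c hc => le_iSup₂_of_le c (hc.trans_lt hb).ne le_rfl

end Decomposition

section Pushforward

variable [Preorder A] {W s : A → α}

section Preorder

variable [Preorder B] (f : A ↪o B)

def OrderEmbedding.pushforward (f : A ↪o B) (W : A → α) (b : B) : α :=
  ⨆ a, ⨆ _ : f a ≤ b, W a

theorem OrderEmbedding.pushforward_apply_self (hW : Monotone W) (a : A) :
    f.pushforward W (f a) = W a :=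
  le_antisymm (iSup₂_le fun _ h => hW (f.le_iff_le.1 h)) (le_iSup₂_of_le a le_rfl le_rfl)

theorem IsDecomposition.pushforward_eq (hs : IsDecomposition W s) (b : B) :
    f.pushforward W b = ⨆ a, ⨆ _ : f a ≤ b, s a := by
  refine le_antisymm (iSup₂_le fun a ha => ?_)
    (iSup₂_le fun a ha => le_iSup₂_of_le a ha (hs.le_apply a))
  rw [hs.2 a]
  exact iSup₂_le fun a' ha' => le_iSup₂_of_le a' ((f.monotone ha').trans ha) le_rfl

theorem IsDecomposition.pushforward (hs : IsDecomposition W s) :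
    IsDecomposition (f.pushforward W) (extend f s ⊥) := by
  refine ⟨hs.1.extend_bot f.injective, fun b => ?_⟩
  rw [hs.pushforward_eq f,
    biSup_eq_biSup_comp_of_forall_notMem_range (fun c hc => extend_apply' s ⊥ c hc) (· ≤ b)]
  simp only [f.injective.extend_apply]

end Preorder

variable [PartialOrder B] (f : A ↪o B)

theorem OrderEmbedding.pushforward_le_iSup_lt (hW : Monotone W) {b : B} (hb : b ∉ range f) :
    f.pushforward W b ≤ ⨆ c, ⨆ _ : c < b, f.pushforward W c :=
  iSup₂_le fun a ha =>
    le_iSup₂_of_le (f a) (ha.lt_of_ne fun h => hb ⟨a, h⟩) (f.pushforward_apply_self hW a).ge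

variable {f} in
theorem IsDecomposition.of_pushforward {t : B → α} (hW : Monotone W)
    (ht : IsDecomposition (f.pushforward W) t) : IsDecomposition W (t ∘ f) := by
  have ht_bot : ∀ c ∉ range f, t c = ⊥ := fun c hc =>
    ht.eq_bot_of_le_iSup_lt (f.pushforward_le_iSup_lt hW hc)
  refine ⟨ht.1.comp f.injective, fun a => ?_⟩
  rw [← f.pushforward_apply_self hW a, ht.2,
    biSup_eq_biSup_comp_of_forall_notMem_range ht_bot (· ≤ f a)]
  simp only [f.le_iff_le, comp_apply]

theorem isDecomposable_pushforward_iff (hW : Monotone W) :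
    IsDecomposable (f.pushforward W) ↔ IsDecomposable W :=
  ⟨fun ⟨_, ht⟩ => ⟨_, IsDecomposition.of_pushforward hW ht⟩,
    fun ⟨_, hs⟩ => ⟨_, IsDecomposition.pushforward f hs⟩⟩

end Pushforward

end

/-- For an order embedding `f : 𝒜 ↪o ℬ` and a monotone
`W : 𝒜 → Submodule K V`, with pushforward `f_*W (b) = ⨆_{f a ≤ b} W a`,
`W` is decomposable iff `f_*W` is decomposable. -/
theorem stmt_13 {K V A B : Type*} [Field K] [AddCommGroup V] [Module K V]
    [PartialOrder A] [PartialOrder B]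
    (f : A ↪o B) (W : A → Submodule K V) (hW : Monotone W) :
    (∃ s : A → Submodule K V,
        (∀ a : A, s a ⊓ (⨆ b, ⨆ _ : b ≠ a, s b) = ⊥) ∧
        (∀ a : A, W a = ⨆ b, ⨆ _ : b ≤ a, s b)) ↔
      (∃ t : B → Submodule K V,
        (∀ b : B, t b ⊓ (⨆ c, ⨆ _ : c ≠ b, t c) = ⊥) ∧
        (∀ b : B, (⨆ a, ⨆ _ : f a ≤ b, W a) = ⨆ c, ⨆ _ : c ≤ b, t c)) := by
  simpa only [IsDecomposable, IsDecomposition, OrderEmbedding.pushforward, iSupIndep,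
    disjoint_iff] using (isDecomposable_pushforward_iff f hW).symm
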